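/- Let n ≥ 3 and let (u,v,w) be a solution of the Neumann–Moser system of dimension n whose coordinate functions are twice differentiable. For each t define h₁(t) = w₁(t) + u₁(t) and, for 3 ≤ k ≤ n, h_k(t) = u_k + w_k + w₁u_{k−1} + ∑_{i=1}^{k−2}(u_i w_{k−i} + v_i v_{k−1−i}) (the coefficient of ξ^{2n+1−k} in U(t,ξ)W(t,ξ) + V(t,ξ)²). Then for every 3 ≤ k ≤ n and every t: u_k = (1/4)·ü_{k−1} − (h₁ − (3/2)u₁)·u_{k−1} + (1/2)·h_k − (1/8)·∑_{i=1}^{k−2}( 4u_i u_{k−i} + u̇_i u̇_{k−i−1} − 2u_i ü_{k−i−1} + 4(h₁ − 2u₁) u_i u_{k−1−i} ). -/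

import Mathlib

open Finset Polynomial

/-! Comparing coefficients in `∂ₜU = -2V` gives `v_j = -u̇_j / 2`, and comparing the coefficients
of `ξ^(n-j)` in `∂ₜV = -(ξ + w₁ - u₁)U + W` gives `v̇_j = w_{j+1} - u_{j+1} - (w₁ - u₁)u_j`.
Together they express `w_j` (`2 ≤ j ≤ n`) through `u_j`, `u_{j-1}` and `ü_{j-1}`; substituting this
and `v_i = -u̇_i / 2` into the definition of `h_k` and solving for `u_k` gives the recursion. -/

noncomputable def descPoly {R : Type*} [Semiring R] (a : ℕ → R) (m : ℕ) : R[X] :=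
  ∑ i ∈ Icc 1 m, C (a i) * X ^ (m - i)

section descPoly

variable {R : Type*} [CommSemiring R]

@[simp]
theorem eval_descPoly (a : ℕ → R) (m : ℕ) (x : R) :
    (descPoly a m).eval x = ∑ i ∈ Icc 1 m, a i * x ^ (m - i) := by
  simp [descPoly, eval_finsetSum]

theorem coeff_descPoly (a : ℕ → R) {m d : ℕ} (hd : d < m) :
    (descPoly a m).coeff d = a (m - d) := by
  rw [descPoly, finsetSum_coeff, sum_eq_single_of_mem (m - d) (mem_Icc.2 ⟨by omega, by omega⟩)]
  · simp [coeff_C_mul, coeff_X_pow, show m - (m - d) = d by omega]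
  · intro i hi hid
    simp only [mem_Icc] at hi
    rw [coeff_C_mul, coeff_X_pow, if_neg (by omega), mul_zero]

end descPoly

theorem deriv_eval_descPoly {𝕜 𝕜' : Type*} [NontriviallyNormedField 𝕜] [NormedField 𝕜']
    [NormedAlgebra 𝕜 𝕜'] {a : ℕ → 𝕜 → 𝕜'} {m : ℕ} {t : 𝕜}
    (ha : ∀ i ∈ Icc 1 m, DifferentiableAt 𝕜 (a i) t) (x : 𝕜') :
    deriv (fun s => (descPoly (a · s) m).eval x) t =
      (descPoly (fun i => deriv (a i) t) m).eval x := by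
  simp only [eval_descPoly]
  rw [deriv_fun_sum fun i hi => (ha i hi).mul_const _]
  exact sum_congr rfl fun i _ => deriv_mul_const_field _

section NeumannMoser

variable {n : ℕ} {u v w : ℕ → ℝ → ℂ} {U V W : ℝ → ℂ → ℂ}
  (hU : ∀ t ξ, U t ξ = ξ ^ n + ∑ i ∈ Icc 1 n, u i t * ξ ^ (n - i))
  (hV : ∀ t ξ, V t ξ = ∑ i ∈ Icc 1 n, v i t * ξ ^ (n - i))
  (hW : ∀ t ξ, W t ξ = ξ ^ (n + 1) + ∑ i ∈ Icc 1 (n + 1), w i t * ξ ^ (n + 1 - i))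
include hU hV

theorem v_eq_neg_half_deriv_u (hu : ∀ i ∈ Icc 1 n, Differentiable ℝ (u i))
    (hUt : ∀ ξ t, deriv (fun s => U s ξ) t = -2 * V t ξ) {j : ℕ} (hj : j ∈ Icc 1 n) (t : ℝ) :
    v j t = -(1 / 2) * deriv (u j) t := by
  rw [mem_Icc] at hj
  have hpoly : descPoly (fun i => deriv (u i) t) n = C (-2) * descPoly (v · t) n := by
    refine Polynomial.funext fun ξ => ?_
    have hUξ : (fun s => U s ξ) = fun s => ξ ^ n + (descPoly (u · s) n).eval ξ :=
      funext fun s => by rw [hU, eval_descPoly]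
    rw [eval_mul, eval_C, ← deriv_eval_descPoly (fun i hi => (hu i hi).differentiableAt),
      ← deriv_const_add (ξ ^ n), ← hUξ, hUt, hV, eval_descPoly]
  have hcoeff := congrArg (coeff · (n - j)) hpoly
  simp only [coeff_C_mul, coeff_descPoly _ (show n - j < n by omega),
    show n - (n - j) = j by omega] at hcoeff
  linear_combination (1 / 2) * hcoeff

include hW in
theorem deriv_v_eq_w_sub_u (hv : ∀ i ∈ Icc 1 n, Differentiable ℝ (v i))
    (hVt : ∀ ξ t, deriv (fun s => V s ξ) t = -(ξ + w 1 t - u 1 t) * U t ξ + W t ξ)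
    (j : ℕ) (hj : 1 ≤ j) (hjn : j < n) (t : ℝ) :
    deriv (v j) t = w (j + 1) t - u (j + 1) t - (w 1 t - u 1 t) * u j t := by
  have hpoly : descPoly (fun i => deriv (v i) t) n =
      -(X + C (w 1 t - u 1 t)) * (X ^ n + descPoly (u · t) n)
        + (X ^ (n + 1) + descPoly (w · t) (n + 1)) := by
    refine Polynomial.funext fun ξ => ?_
    have hVξ : (fun s => V s ξ) = fun s => (descPoly (v · s) n).eval ξ :=
      funext fun s => by rw [hV, eval_descPoly]
    rw [← deriv_eval_descPoly (fun i hi => (hv i hi).differentiableAt), ← hVξ, hVt, hU, hW]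
    simp only [eval_add, eval_mul, eval_neg, eval_pow, eval_X, eval_C, eval_descPoly]
    ring
  obtain ⟨d, hd⟩ : ∃ d, n - j = d + 1 := ⟨n - j - 1, by omega⟩
  have hcoeff := congrArg (coeff · (d + 1)) hpoly
  simp only [neg_mul, add_mul, coeff_add, coeff_neg, coeff_X_mul, coeff_C_mul, coeff_X_pow,
    coeff_descPoly _ (show d + 1 < n by omega), coeff_descPoly _ (show d + 1 < n + 1 by omega),
    coeff_descPoly _ (show d < n by omega)] at hcoeff
  simp only [show n - (d + 1) = j by omega, show n - d = j + 1 by omega,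
    show n + 1 - (d + 1) = j + 1 by omega, if_neg (show d + 1 ≠ n by omega),
    if_neg (show d ≠ n by omega), if_neg (show d + 1 ≠ n + 1 by omega)] at hcoeff
  linear_combination hcoeff

include hW in
theorem w_eq_u_add_sub_half_deriv_deriv
    (hu : ∀ i ∈ Icc 1 n, Differentiable ℝ (u i) ∧ Differentiable ℝ (deriv (u i)))
    (hv : ∀ i ∈ Icc 1 n, Differentiable ℝ (v i))
    (hUt : ∀ ξ t, deriv (fun s => U s ξ) t = -2 * V t ξ)
    (hVt : ∀ ξ t, deriv (fun s => V s ξ) t = -(ξ + w 1 t - u 1 t) * U t ξ + W t ξ)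
    (j : ℕ) (hj : 2 ≤ j) (hjn : j ≤ n) (t : ℝ) :
    w j t = u j t + (w 1 t - u 1 t) * u (j - 1) t - (1 / 2) * deriv (deriv (u (j - 1))) t := by
  obtain ⟨i, rfl⟩ : ∃ i, j = i + 1 := ⟨j - 1, by omega⟩
  have hi : i ∈ Icc 1 n := mem_Icc.2 ⟨by omega, by omega⟩
  have hvi : v i = fun s => -(1 / 2) * deriv (u i) s :=
    funext (v_eq_neg_half_deriv_u hU hV (fun k hk => (hu k hk).1) hUt hi)
  have hderiv := deriv_v_eq_w_sub_u hU hV hW hv hVt i (by omega) (by omega) t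
  rw [hvi, deriv_const_mul _ ((hu i hi).2 t)] at hderiv
  simp only [add_tsub_cancel_right]
  linear_combination -hderiv

end NeumannMoser

theorem neumann_moser_u_recursion_general (n : ℕ)
    (u v w : ℕ → ℝ → ℂ)
    (hu : ∀ i ∈ Finset.Icc 1 n, Differentiable ℝ (u i) ∧ Differentiable ℝ (deriv (u i)))
    (hv : ∀ i ∈ Finset.Icc 1 n, Differentiable ℝ (v i) ∧ Differentiable ℝ (deriv (v i)))
    (U V W : ℝ → ℂ → ℂ)
    (hU : ∀ t ξ, U t ξ = ξ ^ n + ∑ i ∈ Finset.Icc 1 n, u i t * ξ ^ (n - i))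
    (hV : ∀ t ξ, V t ξ = ∑ i ∈ Finset.Icc 1 n, v i t * ξ ^ (n - i))
    (hW : ∀ t ξ, W t ξ = ξ ^ (n + 1) + ∑ i ∈ Finset.Icc 1 (n + 1), w i t * ξ ^ (n + 1 - i))
    (hUt : ∀ ξ t, deriv (fun s => U s ξ) t = -2 * V t ξ)
    (hVt : ∀ ξ t, deriv (fun s => V s ξ) t = -(ξ + w 1 t - u 1 t) * U t ξ + W t ξ)
    (h : ℕ → ℝ → ℂ)
    (hh1 : ∀ t, h 1 t = w 1 t + u 1 t)
    (hhk : ∀ k, 3 ≤ k → k ≤ n → ∀ t,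
      h k t = u k t + w k t + w 1 t * u (k - 1) t
        + ∑ i ∈ Finset.Icc 1 (k - 2), (u i t * w (k - i) t + v i t * v (k - 1 - i) t)) :
    ∀ k, 3 ≤ k → k ≤ n → ∀ t : ℝ,
      u k t = (1 / 4) * deriv (deriv (u (k - 1))) t
        - (h 1 t - (3 / 2) * u 1 t) * u (k - 1) t + (1 / 2) * h k t
        - (1 / 8) * ∑ i ∈ Finset.Icc 1 (k - 2),
            (4 * u i t * u (k - i) t + deriv (u i) t * deriv (u (k - i - 1)) t
              - 2 * u i t * deriv (deriv (u (k - i - 1))) t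
              + 4 * (h 1 t - 2 * u 1 t) * u i t * u (k - 1 - i) t) := by
  intro k hk hkn t
  have hv' : ∀ i ∈ Icc 1 n, v i t = -(1 / 2) * deriv (u i) t := fun i hi =>
    v_eq_neg_half_deriv_u hU hV (fun j hj => (hu j hj).1) hUt hi t
  have hw' := w_eq_u_add_sub_half_deriv_deriv hU hV hW hu (fun i hi => (hv i hi).1) hUt hVt
  have hsum : ∑ i ∈ Icc 1 (k - 2), (u i t * w (k - i) t + v i t * v (k - 1 - i) t)
      = (1 / 4) * ∑ i ∈ Icc 1 (k - 2),
          (4 * u i t * u (k - i) t + deriv (u i) t * deriv (u (k - i - 1)) t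
            - 2 * u i t * deriv (deriv (u (k - i - 1))) t
            + 4 * (h 1 t - 2 * u 1 t) * u i t * u (k - 1 - i) t) := by
    rw [mul_sum]
    refine sum_congr rfl fun i hi => ?_
    simp only [mem_Icc] at hi
    rw [hw' (k - i) (by omega) (by omega) t, hv' i (mem_Icc.2 ⟨by omega, by omega⟩),
      hv' (k - 1 - i) (mem_Icc.2 ⟨by omega, by omega⟩), hh1, show k - 1 - i = k - i - 1 by omega]
    ring
  rw [hhk k hk hkn t, hsum, hh1, hw' k (by omega) hkn t]
  ring

/-- The recursion for the coordinates `u_k` (`3 ≤ k ≤ n`) of a solution of the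
Neumann–Moser system, in terms of the integrals `h₁` and `h_k`. -/
theorem neumann_moser_u_recursion (n : ℕ) (hn : 3 ≤ n)
    (u v w : ℕ → ℝ → ℂ)
    (hu : ∀ i ∈ Finset.Icc 1 n, Differentiable ℝ (u i) ∧ Differentiable ℝ (deriv (u i)))
    (hv : ∀ i ∈ Finset.Icc 1 n, Differentiable ℝ (v i) ∧ Differentiable ℝ (deriv (v i)))
    (hw : ∀ i ∈ Finset.Icc 1 (n + 1), Differentiable ℝ (w i) ∧ Differentiable ℝ (deriv (w i)))
    (U V W : ℝ → ℂ → ℂ)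
    (hU : ∀ t ξ, U t ξ = ξ ^ n + ∑ i ∈ Finset.Icc 1 n, u i t * ξ ^ (n - i))
    (hV : ∀ t ξ, V t ξ = ∑ i ∈ Finset.Icc 1 n, v i t * ξ ^ (n - i))
    (hW : ∀ t ξ, W t ξ = ξ ^ (n + 1) + ∑ i ∈ Finset.Icc 1 (n + 1), w i t * ξ ^ (n + 1 - i))
    (hUt : ∀ ξ t, deriv (fun s => U s ξ) t = -2 * V t ξ)
    (hVt : ∀ ξ t, deriv (fun s => V s ξ) t = -(ξ + w 1 t - u 1 t) * U t ξ + W t ξ)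
    (hWt : ∀ ξ t, deriv (fun s => W s ξ) t = 2 * (ξ + w 1 t - u 1 t) * V t ξ)
    (h : ℕ → ℝ → ℂ)
    (hh1 : ∀ t, h 1 t = w 1 t + u 1 t)
    (hhk : ∀ k, 3 ≤ k → k ≤ n → ∀ t,
      h k t = u k t + w k t + w 1 t * u (k - 1) t
        + ∑ i ∈ Finset.Icc 1 (k - 2), (u i t * w (k - i) t + v i t * v (k - 1 - i) t)) :
    ∀ k, 3 ≤ k → k ≤ n → ∀ t : ℝ,
      u k t = (1 / 4) * deriv (deriv (u (k - 1))) t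
        - (h 1 t - (3 / 2) * u 1 t) * u (k - 1) t + (1 / 2) * h k t
        - (1 / 8) * ∑ i ∈ Finset.Icc 1 (k - 2),
            (4 * u i t * u (k - i) t + deriv (u i) t * deriv (u (k - i - 1)) t
              - 2 * u i t * deriv (deriv (u (k - i - 1))) t
              + 4 * (h 1 t - 2 * u 1 t) * u i t * u (k - 1 - i) t) :=
  neumann_moser_u_recursion_general n u v w hu hv U V W hU hV hW hUt hVt h hh1 hhk
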